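/- arXiv:1501.06681 — 4 statements merged into one kernel-verified Lean document; each statement's English description precedes it below -/
import Mathlib

section
/- If a graph G on n ≥ 4 vertices has no universal line, then G induces at least n distinct lines. -/
def gline {V : Type*} (G : SimpleGraph V) [DecidableRel G.Adj] (a b : V) : Set V :=
  if G.Adj a b then {a, b} ∪ {c | G.Adj a c ∧ G.Adj b c} else {a, b}

def glines {V : Type*} (G : SimpleGraph V) [DecidableRel G.Adj] : Set (Set V) :=
  {s | ∃ a b, a ≠ b ∧ s = gline G a b}

/-!
Write `H = Gᶜ`. A pair that is non-adjacent in `G` spans the line `{a, b}`, so the edges of `H`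
give `|E(H)|` distinct lines, none of which is spanned by an adjacent pair. Every vertex off the
roots of a breadth-first forest of `H` owns the edge to its parent, so `|E(H)| ≥ n - k`, where `k`
is the number of components of `H`; it remains to find `k` distinct lines spanned by adjacent
pairs. Vertices in different components of `H` are adjacent in `G`, and two isolated vertices of
`H` would span a universal line. Fix `x` with an `H`-neighbour `y`, a component `d` not
containing `x`, and representatives `r c` of the components. The lines spanned by `r c` and `x`,
for `c ≠ [x]`, are pairwise distinct, since an `H`-neighbour of one of the two representatives
lies on one line and not the other; the line spanned by `y` and `r d` is the only one missing `x`. If `G` has no edges at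
all, the `n(n-1)/2 ≥ n` pairs suffice.
-/

open Function SimpleGraph

namespace SimpleGraph

variable {V : Type*} {H : SimpleGraph V} {u v : V}

lemma Reachable.exists_adj_dist_lt (h : H.Reachable u v) (hne : u ≠ v) :
    ∃ w, H.Adj u w ∧ H.dist w v < H.dist u v := by
  obtain ⟨p, hp⟩ := h.exists_walk_length_eq_dist
  cases p with
  | nil => exact absurd rfl hne
  | cons hadj q => exact ⟨_, hadj, hp ▸ (dist_le q).trans_lt (by simp)⟩

theorem card_vert_le_card_edgeSet_add_card_connectedComponent (H : SimpleGraph V) :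
    Nat.card V ≤ Nat.card H.edgeSet + Nat.card H.ConnectedComponent := by
  classical
  obtain hV | hV := (finite_or_infinite V).symm
  · simp
  let root : V → V := fun v => Quot.out (H.connectedComponentMk v)
  have reachable_root (v : V) : H.Reachable v (root v) :=
    ConnectedComponent.exact (Quot.out_eq _).symm
  choose! parent adj_parent dist_parent using
    fun v (hv : root v ≠ v) => (reachable_root v).exists_adj_dist_lt (Ne.symm hv)
  -- distance to the root drops along parent edges, so no edge is the parent edge of both ends
  let f : V → H.edgeSet ⊕ H.ConnectedComponent := fun v =>
    if hv : root v = v then .inr (H.connectedComponentMk v)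
    else .inl ⟨s(v, parent v), adj_parent v hv⟩
  have hf : Injective f := by
    intro v w hvw
    by_cases hv : root v = v <;> by_cases hw : root w = w <;>
      simp only [f, hv, hw, dite_true, dite_false, reduceCtorEq, Sum.inr.injEq, Sum.inl.injEq,
        Subtype.ext_iff, Sym2.eq_iff] at hvw
    · rw [← hv, ← hw]; exact congrArg Quot.out hvw
    · obtain ⟨rfl, -⟩ | ⟨hvw, hwv⟩ := hvw
      · rfl
      have hroot : root w = root v :=
        congrArg Quot.out (ConnectedComponent.sound (hwv ▸ adj_parent v hv).reachable).symm
      have := dist_parent v hv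
      have := dist_parent w hw
      rw [← hvw, hroot, ← hwv] at this
      omega
  simpa [Nat.card_sum] using Nat.card_le_card_of_injective f hf

end SimpleGraph

section Lines

variable {V : Type*} {G : SimpleGraph V} [DecidableRel G.Adj] {a b c d z : V}

lemma left_mem_gline : a ∈ gline G a b := by
  unfold gline; split <;> simp

lemma right_mem_gline : b ∈ gline G a b := by
  unfold gline; split <;> simp

lemma gline_of_not_adj (h : ¬G.Adj a b) : gline G a b = {a, b} := if_neg h

lemma mem_gline_of_adj (hab : G.Adj a b) (ha : G.Adj a z) (hb : G.Adj b z) :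
    z ∈ gline G a b := by
  simp [gline, hab, ha, hb]

lemma notMem_gline_of_compl_adj (ha : Gᶜ.Adj a z) (hb : z ≠ b) : z ∉ gline G a b := by
  rw [compl_adj] at ha
  unfold gline
  split <;> simp [ha.1.symm, hb, ha.2]

lemma gline_ne_pair (hab : G.Adj a b) (hcd : ¬G.Adj c d) : gline G a b ≠ {c, d} := by
  intro h
  have ha : a ∈ ({c, d} : Set V) := h ▸ left_mem_gline
  have hb : b ∈ ({c, d} : Set V) := h ▸ right_mem_gline
  simp only [Set.mem_insert_iff, Set.mem_singleton_iff] at ha hb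
  rcases ha with rfl | rfl <;> rcases hb with rfl | rfl
  exacts [hab.ne rfl, hcd hab, hcd hab.symm, hab.ne rfl]

lemma gline_eq_univ_of_compl_isolated (hab : a ≠ b) (ha : ∀ z, ¬Gᶜ.Adj a z)
    (hb : ∀ z, ¬Gᶜ.Adj b z) : gline G a b = Set.univ := by
  have adj_of_ne {x : V} (hx : ∀ z, ¬Gᶜ.Adj x z) {z : V} (hz : x ≠ z) : G.Adj x z := by
    simpa [hz] using hx z
  refine Set.eq_univ_of_forall fun z => ?_
  by_cases hza : z = a
  · exact hza ▸ left_mem_gline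
  by_cases hzb : z = b
  · exact hzb ▸ right_mem_gline
  exact mem_gline_of_adj (adj_of_ne ha hab) (adj_of_ne ha (Ne.symm hza))
    (adj_of_ne hb (Ne.symm hzb))

lemma card_edgeSet_compl_add_card_le_ncard_glines [Finite V] {ι : Type*} (p q : ι → V)
    (hpq : ∀ i, G.Adj (p i) (q i)) (hinj : Injective fun i => gline G (p i) (q i)) :
    Nat.card Gᶜ.edgeSet + Nat.card ι ≤ (glines G).ncard := by
  set pairs := ((↑) : Sym2 V → Set V) '' Gᶜ.edgeSet
  set adjLines := Set.range fun i => gline G (p i) (q i)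
  have hpairs : pairs.ncard = Nat.card Gᶜ.edgeSet := by
    rw [Set.ncard_image_of_injective _ SetLike.coe_injective, Nat.card_coe_set_eq]
  have hsub : pairs ∪ adjLines ⊆ glines G := by
    rintro _ (⟨e, he, rfl⟩ | ⟨i, rfl⟩)
    · induction e using Sym2.ind with
      | _ a b =>
        rw [mem_edgeSet, compl_adj] at he
        exact ⟨a, b, he.1, by rw [Sym2.coe_mk, gline_of_not_adj he.2]⟩
    · exact ⟨p i, q i, (hpq i).ne, rfl⟩
  have hdisj : Disjoint pairs adjLines := by
    rw [Set.disjoint_left]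
    rintro _ ⟨e, he, rfl⟩ ⟨i, hi⟩
    induction e using Sym2.ind with
    | _ a b =>
      rw [mem_edgeSet, compl_adj] at he
      exact gline_ne_pair (hpq i) he.2 (hi.trans Sym2.coe_mk)
  calc Nat.card Gᶜ.edgeSet + Nat.card ι = (pairs ∪ adjLines).ncard := by
        rw [Set.ncard_union_eq hdisj, hpairs, Set.ncard_range_of_injective hinj]
    _ ≤ (glines G).ncard := Set.ncard_le_ncard hsub

lemma adj_of_connectedComponentMk_compl_ne
    (h : Gᶜ.connectedComponentMk a ≠ Gᶜ.connectedComponentMk b) : G.Adj a b := by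
  by_contra hab
  refine h (ConnectedComponent.connectedComponentMk_eq_of_adj ?_)
  exact (compl_adj G a b).mpr ⟨fun hab' => h (hab' ▸ rfl), hab⟩

lemma exists_compl_adj_or_exists_compl_adj (huniv : ∀ a b : V, a ≠ b → gline G a b ≠ Set.univ)
    (hab : a ≠ b) : (∃ z, Gᶜ.Adj a z) ∨ ∃ z, Gᶜ.Adj b z := by
  by_contra! h
  exact huniv a b hab (gline_eq_univ_of_compl_isolated hab h.1 h.2)

lemma exists_injective_adj_glines_of_nontrivial
    (huniv : ∀ a b : V, a ≠ b → gline G a b ≠ Set.univ) [Nontrivial Gᶜ.ConnectedComponent] :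
    ∃ p q : Gᶜ.ConnectedComponent → V,
      (∀ c, G.Adj (p c) (q c)) ∧ Injective fun c => gline G (p c) (q c) := by
  classical
  set C := Gᶜ.connectedComponentMk
  let r : Gᶜ.ConnectedComponent → V := Quot.out
  have hr (c) : C (r c) = c := Quot.out_eq c
  obtain ⟨x, y, hxy⟩ : ∃ x y, Gᶜ.Adj x y := by
    obtain ⟨c, c', hcc'⟩ := exists_pair_ne Gᶜ.ConnectedComponent
    have hne : r c ≠ r c' := fun h => hcc' (by rw [← hr c, ← hr c', h])
    rcases exists_compl_adj_or_exists_compl_adj huniv hne with ⟨z, hz⟩ | ⟨z, hz⟩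
    exacts [⟨_, _, hz⟩, ⟨_, _, hz⟩]
  have hCy : C y = C x := (ConnectedComponent.connectedComponentMk_eq_of_adj hxy).symm
  obtain ⟨d, hd⟩ := exists_ne (C x)
  have adj_of_ne {u w : V} (h : C u ≠ C w) : G.Adj u w := adj_of_connectedComponentMk_compl_ne h
  have separate {c c'} (hc : c ≠ C x) (hc' : c' ≠ C x) (hcc' : c ≠ c') (z : V)
      (hz : Gᶜ.Adj (r c) z) : gline G (r c) x ≠ gline G (r c') x := by
    have hCz : C z = c :=
      (ConnectedComponent.connectedComponentMk_eq_of_adj hz).symm.trans (hr c)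
    refine (ne_of_mem_of_not_mem' (a := z) (mem_gline_of_adj ?_ ?_ ?_) ?_).symm
    · exact adj_of_ne (by rwa [hr])
    · exact adj_of_ne (by rw [hr, hCz]; exact hcc'.symm)
    · exact adj_of_ne (by rw [hCz]; exact hc.symm)
    · exact notMem_gline_of_compl_adj hz fun h => hc (hCz ▸ h ▸ rfl)
  have hx_out : x ∉ gline G y (r d) :=
    notMem_gline_of_compl_adj hxy.symm fun h => hd (hr d ▸ h ▸ rfl)
  refine ⟨fun c => if c = C x then y else r c, fun c => if c = C x then r d else x, ?_, ?_⟩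
  · intro c
    dsimp only
    split_ifs with hc
    · exact adj_of_ne (by rw [hCy, hr]; exact hd.symm)
    · exact adj_of_ne (by rwa [hr])
  · intro c c' h
    simp only at h
    split_ifs at h with hc hc' hc'
    · rw [hc, hc']
    · exact absurd (h ▸ right_mem_gline) hx_out
    · exact absurd (h ▸ right_mem_gline) hx_out
    · by_contra hcc'
      have hne : r c ≠ r c' := fun h => hcc' (by rw [← hr c, ← hr c', h])
      rcases exists_compl_adj_or_exists_compl_adj huniv hne with ⟨z, hz⟩ | ⟨z, hz⟩
      · exact separate hc hc' hcc' z hz h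
      · exact separate hc' hc (Ne.symm hcc') z hz h.symm

lemma exists_injective_adj_glines (huniv : ∀ a b : V, a ≠ b → gline G a b ≠ Set.univ) (hG : G ≠ ⊥) :
    ∃ p q : Gᶜ.ConnectedComponent → V,
      (∀ c, G.Adj (p c) (q c)) ∧ Injective fun c => gline G (p c) (q c) := by
  cases subsingleton_or_nontrivial Gᶜ.ConnectedComponent
  · obtain ⟨a, b, hab⟩ := ne_bot_iff_exists_adj.mp hG
    exact ⟨fun _ => a, fun _ => b, fun _ => hab, injective_of_subsingleton _⟩
  · exact exists_injective_adj_glines_of_nontrivial huniv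

end Lines

theorem stmt_3 {V : Type*} [Fintype V] (G : SimpleGraph V) [DecidableRel G.Adj]
    (n : ℕ) (hn : Fintype.card V = n) (h4 : 4 ≤ n)
    (huniv : ∀ a b : V, a ≠ b → gline G a b ≠ Set.univ) :
    n ≤ (glines G).ncard := by
  subst hn
  rcases eq_or_ne G ⊥ with rfl | hG
  · calc Fintype.card V = (Fintype.card V).choose 1 := (Nat.choose_one_right _).symm
      _ ≤ (Fintype.card V).choose 2 := Nat.choose_le_succ_of_lt_half_left (by omega)
      _ = Nat.card (⊥ : SimpleGraph V)ᶜ.edgeSet + Nat.card Empty := by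
        classical
        rw [compl_bot, Nat.card_eq_fintype_card, ← edgeFinset_card,
          card_edgeFinset_top_eq_card_choose_two, Nat.card_of_isEmpty, add_zero]
      _ ≤ (glines ⊥).ncard := card_edgeSet_compl_add_card_le_ncard_glines Empty.elim Empty.elim
        (fun i => i.elim) (injective_of_subsingleton _)
  · obtain ⟨p, q, hpq, hinj⟩ := exists_injective_adj_glines huniv hG
    calc Fintype.card V = Nat.card V := Nat.card_eq_fintype_card.symm
      _ ≤ Nat.card Gᶜ.edgeSet + Nat.card Gᶜ.ConnectedComponent :=
        Gᶜ.card_vert_le_card_edgeSet_add_card_connectedComponent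
      _ ≤ (glines G).ncard := card_edgeSet_compl_add_card_le_ncard_glines p q hpq hinj
end

section
/- A graph on n ≥ 4 vertices consisting of a clique on n−1 vertices together with one additional vertex that has at most one neighbor in the clique has no universal line and induces exactly n distinct lines. -/
lemma Set.pair_right_injective {α : Type*} (x : α) :
    Function.Injective fun c : α => ({x, c} : Set α) := by
  intro c d h
  rcases Set.pair_eq_pair_iff.1 h with ⟨-, h⟩ | ⟨rfl, rfl⟩
  exacts [h, rfl]

namespace SimpleGraph

variable {V : Type*} (G : SimpleGraph V) [DecidableRel G.Adj]

lemma gline_comm (a b : V) : gline G a b = gline G b a := by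
  simp only [gline, G.adj_comm a b, Set.pair_comm a b, and_comm]

lemma gline_eq_pair_of_subsingleton_neighborSet {x : V} (hx : (G.neighborSet x).Subsingleton)
    (a : V) : gline G x a = {x, a} := by
  rw [gline]
  split_ifs with hxa
  · refine Set.union_eq_left.2 fun c ⟨hxc, hac⟩ => ?_
    exact absurd (hx hxa hxc) hac.ne
  · rfl

lemma gline_eq_compl_of_isClique_compl {x : V} (hclique : G.IsClique {x}ᶜ)
    (hx : (G.neighborSet x).Subsingleton) {a b : V} (hax : a ≠ x) (hbx : b ≠ x) (hab : a ≠ b) :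
    gline G a b = {x}ᶜ := by
  rw [gline, if_pos (hclique hax hbx hab)]
  ext c
  simp only [Set.mem_union, Set.mem_insert_iff, Set.mem_singleton_iff, Set.mem_ofPred_eq,
    Set.mem_compl_iff]
  constructor
  · rintro ((rfl | rfl) | ⟨hac, hbc⟩) rfl
    · exact hax rfl
    · exact hbx rfl
    · exact hab (hx hac.symm hbc.symm)
  · intro hcx
    by_cases hca : c = a
    · exact .inl (.inl hca)
    by_cases hcb : c = b
    · exact .inl (.inr hcb)
    exact .inr ⟨hclique hax hcx (Ne.symm hca), hclique hbx hcx (Ne.symm hcb)⟩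

section CliqueWithPendant

variable {x : V} (hclique : G.IsClique {x}ᶜ) (hx : (G.neighborSet x).Subsingleton)
  (hnt : ({x}ᶜ : Set V).Nontrivial)
include hclique hx hnt

lemma glines_eq_of_isClique_compl :
    glines G = insert {x}ᶜ ((fun c => {x, c}) '' {x}ᶜ) := by
  ext s
  simp only [glines, Set.mem_ofPred_eq, Set.mem_insert_iff, Set.mem_image, Set.mem_compl_iff,
    Set.mem_singleton_iff]
  constructor
  · rintro ⟨a, b, hab, rfl⟩
    by_cases hax : a = x
    · subst hax
      exact .inr ⟨b, Ne.symm hab, (G.gline_eq_pair_of_subsingleton_neighborSet hx b).symm⟩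
    by_cases hbx : b = x
    · subst hbx
      refine .inr ⟨a, hax, ?_⟩
      rw [gline_comm, G.gline_eq_pair_of_subsingleton_neighborSet hx a]
    exact .inl (G.gline_eq_compl_of_isClique_compl hclique hx hax hbx hab)
  · rintro (rfl | ⟨c, hc, rfl⟩)
    · obtain ⟨a, ha, b, hb, hab⟩ := hnt
      exact ⟨a, b, hab, (G.gline_eq_compl_of_isClique_compl hclique hx ha hb hab).symm⟩
    · exact ⟨x, c, Ne.symm hc, (G.gline_eq_pair_of_subsingleton_neighborSet hx c).symm⟩

lemma univ_notMem_glines_of_isClique_compl : Set.univ ∉ glines G := by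
  rw [G.glines_eq_of_isClique_compl hclique hx hnt]
  rintro (h | ⟨c, -, h⟩)
  · exact (Set.eq_univ_iff_forall.1 h.symm x : x ∈ ({x}ᶜ : Set V)) rfl
  · obtain ⟨d, hdx, hdc⟩ := hnt.exists_ne c
    rcases (Set.eq_univ_iff_forall.1 h d : d ∈ ({x, c} : Set V)) with rfl | rfl
    exacts [hdx rfl, hdc rfl]

lemma ncard_glines_of_isClique_compl [Finite V] :
    (glines G).ncard = ({x}ᶜ : Set V).ncard + 1 := by
  rw [G.glines_eq_of_isClique_compl hclique hx hnt, Set.ncard_insert_of_notMem,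
    Set.ncard_image_of_injective _ (Set.pair_right_injective x)]
  rintro ⟨c, -, h⟩
  exact (h ▸ Set.mem_insert x {c} : x ∈ ({x}ᶜ : Set V)) rfl

end CliqueWithPendant

end SimpleGraph

theorem stmt_5 {V : Type*} [Fintype V] (G : SimpleGraph V) [DecidableRel G.Adj]
    (n : ℕ) (hn : Fintype.card V = n) (h4 : 4 ≤ n)
    (x : V) (hclique : ∀ a b : V, a ≠ x → b ≠ x → a ≠ b → G.Adj a b)
    (hx : {y : V | G.Adj x y}.ncard ≤ 1) :
    (∀ a b : V, a ≠ b → gline G a b ≠ Set.univ) ∧ (glines G).ncard = n := by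
  have hclique' : G.IsClique {x}ᶜ := fun a ha b hb hab => hclique a b ha hb hab
  have hx' : (G.neighborSet x).Subsingleton := Set.ncard_le_one_iff_subsingleton.1 hx
  have hcompl : ({x}ᶜ : Set V).ncard = n - 1 := by
    rw [Set.ncard_compl, Set.ncard_singleton, Nat.card_eq_fintype_card, hn]
  have hnt : ({x}ᶜ : Set V).Nontrivial := Set.one_lt_ncard_iff_nontrivial.1 (by omega)
  refine ⟨fun a b hab huniv => ?_, ?_⟩
  · exact G.univ_notMem_glines_of_isClique_compl hclique' hx' hnt ⟨a, b, hab, huniv.symm⟩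
  · rw [G.ncard_glines_of_isClique_compl hclique' hx' hnt, hcompl]
    omega
end

section
/- If a graph G on 4 vertices contains two distinct triangles, then G has a universal line. -/
open Finset

section TwoLargeSubsets

variable {α : Type*} [Fintype α] [DecidableEq α] {s t : Finset α} {n : ℕ}

theorem Finset.union_eq_univ_of_card_eq_of_ne (hα : Fintype.card α = n + 1) (hs : #s = n)
    (ht : #t = n) (hne : s ≠ t) : s ∪ t = univ := by
  have hssub : s ⊂ s ∪ t := by
    refine ssubset_of_subset_of_ne subset_union_left fun h => hne ?_
    exact (eq_of_subset_of_card_le (h ▸ subset_union_right) (by omega)).symm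
  have := card_lt_card hssub
  exact eq_univ_of_card _ (by have := card_le_univ (s ∪ t); omega)

theorem Finset.card_inter_of_card_eq_of_ne (hα : Fintype.card α = n + 1) (hs : #s = n)
    (ht : #t = n) (hne : s ≠ t) : #(s ∩ t) = n - 1 := by
  have := card_union_add_card_inter s t
  rw [union_eq_univ_of_card_eq_of_ne hα hs ht hne, card_univ] at this
  omega

end TwoLargeSubsets

theorem gline_eq_univ_of_isClique_union {V : Type*} {G : SimpleGraph V} [DecidableRel G.Adj]
    {s t : Set V} (hs : G.IsClique s) (ht : G.IsClique t) (hst : s ∪ t = Set.univ) {a b : V}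
    (ha : a ∈ s ∩ t) (hb : b ∈ s ∩ t) (hab : a ≠ b) : gline G a b = Set.univ := by
  refine Set.eq_univ_of_forall fun c => ?_
  rw [gline, if_pos (hs ha.1 hb.1 hab)]
  by_cases hca : c = a
  · simp [hca]
  by_cases hcb : c = b
  · simp [hcb]
  refine Or.inr ?_
  rcases hst.symm ▸ Set.mem_univ c with hc | hc
  · exact ⟨hs ha.1 hc (Ne.symm hca), hs hb.1 hc (Ne.symm hcb)⟩
  · exact ⟨ht ha.2 hc (Ne.symm hca), ht hb.2 hc (Ne.symm hcb)⟩

theorem stmt_7 {V : Type*} [Fintype V] [DecidableEq V] (G : SimpleGraph V)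
    [DecidableRel G.Adj] (hcard : Fintype.card V = 4)
    (t₁ t₂ : Finset V) (ht₁ : G.IsNClique 3 t₁) (ht₂ : G.IsNClique 3 t₂)
    (hne : t₁ ≠ t₂) :
    ∃ a b : V, a ≠ b ∧ gline G a b = Set.univ := by
  have hunion := union_eq_univ_of_card_eq_of_ne hcard ht₁.card_eq ht₂.card_eq hne
  have hinter := card_inter_of_card_eq_of_ne hcard ht₁.card_eq ht₂.card_eq hne
  obtain ⟨a, ha, b, hb, hab⟩ := one_lt_card.mp (by omega : 1 < #(t₁ ∩ t₂))
  refine ⟨a, b, hab, gline_eq_univ_of_isClique_union ht₁.isClique ht₂.isClique ?_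
    (by simpa using ha) (by simpa using hb) hab⟩
  rw [← coe_union, hunion, coe_univ]
end

section
/- If P is a finite poset on n elements with height h(P) ≥ 2 and no universal line, then P induces at least h(P) * C(floor(n/h(P)), 2) + floor(n/h(P)) * (n mod h(P)) + h(P) distinct lines. -/
open Classical

def pcomp {X : Type*} [PartialOrder X] (a b : X) : Prop := a < b ∨ b < a

def pline {X : Type*} [PartialOrder X] (a b : X) : Set X :=
  if pcomp a b then {a, b} ∪ {x | pcomp x a ∧ pcomp x b} else {a, b}

def plines (X : Type*) [PartialOrder X] : Set (Set X) :=
  {s | ∃ a b : X, a ≠ b ∧ s = pline a b}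

/-!
Grade `X` by height, `ℓ : X → {0, …, h - 1}`. The levels are antichains, so each pair inside a
level is a two-point line, and convexity of `m ↦ C(m, 2)` bounds their number below by
`h * C(n / h, 2) + (n / h) * (n % h)`. A maximum chain `c` meets every level once. Each `u ∈ c`
incomparable to some `z` on another level yields a further two-point line `{z, u}`, distinct for
distinct `u` because `c` is a chain. Every other `u ∈ c` is comparable to everything off its
level; two such elements that are alone in their levels would span a universal line, so some `j`
among them has a second point `w` on its level. The lines `u j`, for the other such `u`, and
one line `w k` are then pairwise distinct lines through comparable pairs.
-/

open Finset

section Lines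

variable {X : Type*} [PartialOrder X] {a b u v w : X}

lemma pcomp.symm (h : pcomp a b) : pcomp b a := Or.symm h

lemma pcomp.ne (h : pcomp a b) : a ≠ b := by
  rintro rfl
  exact h.elim (lt_irrefl a) (lt_irrefl a)

lemma pline_of_not_pcomp (h : ¬ pcomp a b) : pline a b = {a, b} := if_neg h

lemma left_mem_pline (a b : X) : a ∈ pline a b := by
  unfold pline; split_ifs <;> simp

lemma right_mem_pline (a b : X) : b ∈ pline a b := by
  unfold pline; split_ifs <;> simp

lemma mem_pline_of_pcomp (hab : pcomp a b) (ha : pcomp w a) (hb : pcomp w b) :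
    w ∈ pline a b := by
  simp [pline, if_pos hab, ha, hb]

lemma notMem_pline_of_not_pcomp (hwa : w ≠ a) (hwb : w ≠ b) (h : ¬ pcomp w a) :
    w ∉ pline a b := by
  unfold pline; split_ifs <;> simp_all

def ComparableOffLevel (ℓ : X → ℕ) (u : X) : Prop := ∀ z, ℓ z ≠ ℓ u → pcomp z u

def AloneInLevel (ℓ : X → ℕ) (u : X) : Prop := ∀ z, ℓ z = ℓ u → z = u

variable {ℓ : X → ℕ} {j : X}

lemma StrictMono.apply_ne_of_pcomp (hℓ : StrictMono ℓ) (h : pcomp a b) : ℓ a ≠ ℓ b :=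
  h.elim (fun h => (hℓ h).ne) (fun h => (hℓ h).ne')

lemma StrictMono.not_pcomp_of_apply_eq (hℓ : StrictMono ℓ) (h : ℓ a = ℓ b) : ¬ pcomp a b :=
  fun hab => hℓ.apply_ne_of_pcomp hab h

lemma notMem_pline_of_apply_eq (hℓ : StrictMono ℓ) (hw : ℓ w = ℓ u) (hwu : w ≠ u)
    (hv : ℓ v ≠ ℓ u) : w ∉ pline u v :=
  notMem_pline_of_not_pcomp hwu (fun h => hv (h ▸ hw)) (hℓ.not_pcomp_of_apply_eq hw)

lemma pline_eq_univ_of_alone (hu : ComparableOffLevel ℓ u) (hv : ComparableOffLevel ℓ v)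
    (hu' : AloneInLevel ℓ u) (hv' : AloneInLevel ℓ v) (huv : pcomp u v) :
    pline u v = Set.univ := by
  refine Set.eq_univ_of_forall fun z => ?_
  by_cases hzu : z = u
  · exact hzu ▸ left_mem_pline u v
  by_cases hzv : z = v
  · exact hzv ▸ right_mem_pline u v
  exact mem_pline_of_pcomp huv (hu z (mt (hu' z) hzu)) (hv z (mt (hv' z) hzv))

lemma pline_ne_pline_of_not_alone (hℓ : StrictMono ℓ) (hj : ComparableOffLevel ℓ j)
    (hv : ComparableOffLevel ℓ v) (hu : ¬ AloneInLevel ℓ u) (huj : pcomp u j) (hvj : pcomp v j)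
    (huv : pcomp u v) : pline u j ≠ pline v j := by
  obtain ⟨w, hwu, hwne⟩ : ∃ w, ℓ w = ℓ u ∧ w ≠ u := by simpa [AloneInLevel] using hu
  have hw : w ∈ pline v j := mem_pline_of_pcomp hvj
    (hv w (hwu ▸ hℓ.apply_ne_of_pcomp huv)) (hj w (hwu ▸ hℓ.apply_ne_of_pcomp huj))
  exact fun heq =>
    notMem_pline_of_apply_eq hℓ hwu hwne (hℓ.apply_ne_of_pcomp huj).symm (heq ▸ hw)

end Lines

-- The tangent line of `m ↦ C(m, 2)` at `q`, with `q * q - C(q, 2)` rewritten as `C(q + 1, 2)`.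
lemma mul_le_choose_two_add_choose_two (q m : ℕ) : q * m ≤ m.choose 2 + (q + 1).choose 2 := by
  have hsq : (0 : ℤ) ≤ ((m : ℤ) - q) * ((m : ℤ) - q - 1) := by
    rcases le_or_gt (m : ℤ) q with h | h
    · exact mul_nonneg_of_nonpos_of_nonpos (by linarith) (by linarith)
    · exact mul_nonneg (by linarith) (by linarith)
  have key : (q * m : ℚ) ≤ m.choose 2 + (q + 1).choose 2 := by
    rw [Nat.cast_choose_two, Nat.cast_choose_two]
    push_cast
    nlinarith [(by exact_mod_cast hsq : (0 : ℚ) ≤ ((m : ℚ) - q) * ((m : ℚ) - q - 1))]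
  exact_mod_cast key

lemma choose_two_add_succ_choose_two (q : ℕ) : q.choose 2 + (q + 1).choose 2 = q * q := by
  have key : (q.choose 2 + (q + 1).choose 2 : ℚ) = q * q := by
    rw [Nat.cast_choose_two, Nat.cast_choose_two]; push_cast; ring
  exact_mod_cast key

lemma card_mul_choose_two_add_le_sum_choose_two {ι : Type*} (s : Finset ι) (f : ι → ℕ) :
    #s * ((∑ i ∈ s, f i) / #s).choose 2 +
        (∑ i ∈ s, f i) / #s * ((∑ i ∈ s, f i) % #s) ≤
      ∑ i ∈ s, (f i).choose 2 := by
  set n := ∑ i ∈ s, f i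
  set q := n / #s
  have hn : q * n = #s * q.choose 2 + q * (n % #s) + #s * (q + 1).choose 2 :=
    calc q * n = q * (#s * q + n % #s) := by rw [Nat.div_add_mod]
      _ = #s * (q.choose 2 + (q + 1).choose 2) + q * (n % #s) := by
          rw [choose_two_add_succ_choose_two]; ring
      _ = _ := by ring
  have hsum : q * n ≤ ∑ i ∈ s, (f i).choose 2 + #s * (q + 1).choose 2 := by
    calc q * n = ∑ i ∈ s, q * f i := mul_sum ..
      _ ≤ ∑ i ∈ s, ((f i).choose 2 + (q + 1).choose 2) :=
          sum_le_sum fun i _ => mul_le_choose_two_add_choose_two q (f i)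
      _ = _ := by rw [sum_add_distrib, sum_const, smul_eq_mul]
  omega

section Height

variable {X : Type*} [PartialOrder X]

lemma LTSeries.length_lt_of_forall_isChain_card_le {h : ℕ}
    (hub : ∀ c : Finset X, IsChain (· < ·) (c : Set X) → #c ≤ h) (p : LTSeries X) :
    p.length < h := by
  have hchain : IsChain (· < ·) ((univ.image p : Finset X) : Set X) := by
    rintro _ hx _ hy hne
    obtain ⟨i, -, rfl⟩ := mem_image.1 hx
    obtain ⟨j, -, rfl⟩ := mem_image.1 hy
    rcases lt_or_gt_of_ne (ne_of_apply_ne p hne) with hij | hij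
    exacts [Or.inl (p.strictMono hij), Or.inr (p.strictMono hij)]
  have := hub _ hchain
  rw [card_image_of_injective _ p.strictMono.injective, card_univ, Fintype.card_fin] at this
  omega

lemma exists_strictMono_forall_lt_of_forall_isChain_card_le {h : ℕ}
    (hub : ∀ c : Finset X, IsChain (· < ·) (c : Set X) → #c ≤ h) :
    ∃ ℓ : X → ℕ, StrictMono ℓ ∧ ∀ x, ℓ x < h := by
  have hlt (x : X) : Order.height x < h := by
    by_contra! hle
    obtain ⟨p, -, hp⟩ := Order.exists_series_of_le_height x hle
    exact (LTSeries.length_lt_of_forall_isChain_card_le hub p).ne hp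
  have hcoe (x : X) : ((Order.height x).toNat : ℕ∞) = Order.height x :=
    ENat.natCast_toNat (hlt x).ne_top
  refine ⟨fun x => (Order.height x).toNat, fun a b hab => ?_, fun x => ?_⟩
  · have := Order.height_strictMono hab ((hlt a).trans (ENat.natCast_lt_top h))
    rw [← hcoe a, ← hcoe b] at this
    exact_mod_cast this
  · have := hlt x
    rw [← hcoe x] at this
    exact_mod_cast this

end Height

section Counting

variable {X : Type*} [Fintype X] [PartialOrder X]

variable (X) in
noncomputable def incompPairs : Finset (Finset X) :=
  {s ∈ univ.powersetCard 2 | (s : Set X).Pairwise fun a b => ¬ pcomp a b}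

variable (X) in
noncomputable def compLines : Finset (Set X) :=
  ({p : X × X | pcomp p.1 p.2} : Finset (X × X)).image fun p => pline p.1 p.2

lemma pline_mem_compLines {a b : X} (h : pcomp a b) : pline a b ∈ compLines X :=
  mem_image.2 ⟨(a, b), mem_filter.2 ⟨mem_univ _, h⟩, rfl⟩

lemma card_incompPairs_add_card_compLines_le :
    #(incompPairs X) + #(compLines X) ≤ (plines X).ncard := by
  have hdisj : Disjoint ((incompPairs X).image ((↑) : Finset X → Set X)) (compLines X) := by
    rw [disjoint_left]
    rintro _ hs hL
    obtain ⟨s, hsI, rfl⟩ := mem_image.1 hs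
    obtain ⟨⟨a, b⟩, hab, heq⟩ := mem_image.1 hL
    have hab : pcomp a b := (mem_filter.1 hab).2
    have ha : a ∈ (s : Set X) := heq ▸ left_mem_pline a b
    have hb : b ∈ (s : Set X) := heq ▸ right_mem_pline a b
    exact (mem_filter.1 hsI).2 ha hb hab.ne hab
  have hsub :
      ↑((incompPairs X).image ((↑) : Finset X → Set X) ∪ compLines X) ⊆ plines X := by
    intro L hL
    rcases mem_union.1 hL with hL | hL
    · obtain ⟨s, hs, rfl⟩ := mem_image.1 hL
      obtain ⟨hs2, hinc⟩ := mem_filter.1 hs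
      obtain ⟨a, b, hab, rfl⟩ := card_eq_two.1 (mem_powersetCard.1 hs2).2
      refine ⟨a, b, hab, ?_⟩
      rw [pline_of_not_pcomp (hinc (by simp) (by simp) hab), coe_pair]
    · obtain ⟨⟨a, b⟩, hab, rfl⟩ := mem_image.1 hL
      exact ⟨a, b, (mem_filter.1 hab).2.ne, rfl⟩
  calc #(incompPairs X) + #(compLines X)
      = #((incompPairs X).image ((↑) : Finset X → Set X) ∪ compLines X) := by
        rw [card_union_of_disjoint hdisj, card_image_of_injective _ coe_injective]
    _ ≤ (plines X).ncard := by
        rw [← Set.ncard_coe_finset]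
        exact Set.ncard_le_ncard hsub

lemma card_filter_not_comparableOffLevel_le {c : Finset X} (hc : IsChain (· < ·) (c : Set X))
    (ℓ : X → ℕ) :
    #{u ∈ c | ¬ ComparableOffLevel ℓ u} ≤
      #{p ∈ incompPairs X | ¬ ∀ a ∈ p, ∀ b ∈ p, ℓ a = ℓ b} := by
  refine card_le_card_of_forall_subsingleton (· ∈ ·) (fun u hu => ?_) (fun p hp => ?_)
  · obtain ⟨z, hzu, hinc⟩ : ∃ z, ℓ z ≠ ℓ u ∧ ¬ pcomp z u := by
      simpa [ComparableOffLevel] using (mem_filter.1 hu).2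
    have hne : z ≠ u := fun h => hzu (h ▸ rfl)
    have hpair : {z, u} ∈ univ.powersetCard 2 :=
      mem_powersetCard.2 ⟨subset_univ _, card_pair hne⟩
    refine ⟨{z, u}, mem_filter.2 ⟨mem_filter.2 ⟨hpair, ?_⟩, ?_⟩, by simp⟩
    · rw [coe_pair]
      exact Set.pairwise_pair.2 fun _ => ⟨hinc, fun h => hinc h.symm⟩
    · exact fun h => hzu (h z (by simp) u (by simp))
  · rintro u ⟨hu, hup⟩ v ⟨hv, hvp⟩
    by_contra huv
    exact (mem_filter.1 (mem_filter.1 hp).1).2 hup hvp huv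
      (hc (mem_filter.1 hu).1 (mem_filter.1 hv).1 huv)

variable {ℓ : X → ℕ}

lemma sum_choose_card_fiber_le_card_incompPairs (hℓ : StrictMono ℓ) (s : Finset ℕ) :
    ∑ i ∈ s, (#{x | ℓ x = i}).choose 2 ≤
      #{p ∈ incompPairs X | ∀ a ∈ p, ∀ b ∈ p, ℓ a = ℓ b} := by
  have hdisj : (s : Set ℕ).PairwiseDisjoint
      fun i => ({x | ℓ x = i} : Finset X).powersetCard 2 := by
    intro i _ j _ hij
    simp only [Function.onFun, disjoint_left, mem_powersetCard]
    rintro p ⟨hpi, hp2⟩ ⟨hpj, -⟩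
    obtain ⟨x, hx⟩ := card_pos.1 (by omega : 0 < #p)
    exact hij ((mem_filter.1 (hpi hx)).2.symm.trans (mem_filter.1 (hpj hx)).2)
  calc ∑ i ∈ s, (#{x | ℓ x = i}).choose 2
      = #(s.biUnion fun i => ({x | ℓ x = i} : Finset X).powersetCard 2) := by
        simp only [card_biUnion hdisj, card_powersetCard]
    _ ≤ _ := card_le_card fun p hp => ?_
  obtain ⟨i, -, hp⟩ := mem_biUnion.1 hp
  obtain ⟨hpi, hp2⟩ := mem_powersetCard.1 hp
  have hlev : ∀ a ∈ p, ℓ a = i := fun a ha => (mem_filter.1 (hpi ha)).2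
  refine mem_filter.2 ⟨mem_filter.2 ⟨mem_powersetCard.2 ⟨subset_univ _, hp2⟩, ?_⟩,
    fun a ha b hb => (hlev a ha).trans (hlev b hb).symm⟩
  intro a ha b hb _
  exact hℓ.not_pcomp_of_apply_eq ((hlev a ha).trans (hlev b hb).symm)

lemma card_le_card_compLines (hℓ : StrictMono ℓ) {G : Finset X}
    (hG : IsChain (· < ·) (G : Set X)) (hGcomp : ∀ u ∈ G, ComparableOffLevel ℓ u)
    (halone : ({u ∈ G | AloneInLevel ℓ u} : Set X).Subsingleton) (hG2 : 2 ≤ #G) :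
    #G ≤ #(compLines X) := by
  obtain ⟨j, hjG, hj⟩ : ∃ j ∈ G, ¬ AloneInLevel ℓ j := by
    by_contra! hall
    obtain ⟨u, hu, v, hv, huv⟩ := one_lt_card.1 hG2
    exact huv (halone ⟨hu, hall u hu⟩ ⟨hv, hall v hv⟩)
  obtain ⟨k, hkG, hkj⟩ := exists_mem_ne hG2 j
  obtain ⟨w, hwj, hwne⟩ : ∃ w, ℓ w = ℓ j ∧ w ≠ j := by simpa [AloneInLevel] using hj
  have hwk : pcomp w k := hGcomp k hkG w (hwj ▸ hℓ.apply_ne_of_pcomp (hG hjG hkG hkj.symm))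
  have hnew : pline w k ∉ (G.erase j).image (pline · j) := by
    rintro hmem
    obtain ⟨u, -, heq⟩ := mem_image.1 hmem
    refine notMem_pline_of_apply_eq hℓ hwj.symm hwne.symm ?_ (heq ▸ right_mem_pline u j)
    exact hwj ▸ hℓ.apply_ne_of_pcomp (hG hkG hjG hkj)
  have hinj : Set.InjOn (pline · j) (G.erase j : Set X) := by
    intro u hu v hv heq
    obtain ⟨huj, huG⟩ := mem_erase.1 hu
    obtain ⟨hvj, hvG⟩ := mem_erase.1 hv
    by_contra huv
    by_cases hua : AloneInLevel ℓ u
    · have hva : ¬ AloneInLevel ℓ v := fun hva => huv (halone ⟨huG, hua⟩ ⟨hvG, hva⟩)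
      exact pline_ne_pline_of_not_alone hℓ (hGcomp j hjG) (hGcomp u huG) hva
        (hG hvG hjG hvj) (hG huG hjG huj) (hG hvG huG (Ne.symm huv)) heq.symm
    · exact pline_ne_pline_of_not_alone hℓ (hGcomp j hjG) (hGcomp v hvG) hua
        (hG huG hjG huj) (hG hvG hjG hvj) (hG huG hvG huv) heq
  have hsub : insert (pline w k) ((G.erase j).image (pline · j)) ⊆ compLines X := by
    refine insert_subset (pline_mem_compLines hwk) fun L hL => ?_
    obtain ⟨u, hu, rfl⟩ := mem_image.1 hL
    obtain ⟨huj, huG⟩ := mem_erase.1 hu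
    exact pline_mem_compLines (hG huG hjG huj)
  calc #G = #(insert (pline w k) ((G.erase j).image (pline · j))) := by
        rw [card_insert_of_notMem hnew, card_image_of_injOn hinj, card_erase_of_mem hjG]
        omega
    _ ≤ #(compLines X) := card_le_card hsub

lemma card_filter_comparableOffLevel_le_card_compLines (hℓ : StrictMono ℓ) {c : Finset X}
    (hc : IsChain (· < ·) (c : Set X)) (hc2 : 2 ≤ #c)
    (huniv : ∀ a b : X, a ≠ b → pline a b ≠ Set.univ) :
    #{u ∈ c | ComparableOffLevel ℓ u} ≤ #(compLines X) := by
  set G := {u ∈ c | ComparableOffLevel ℓ u}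
  have hG : IsChain (· < ·) (G : Set X) := hc.mono (coe_subset.2 (filter_subset _ c))
  have hGcomp : ∀ u ∈ G, ComparableOffLevel ℓ u := fun u hu => (mem_filter.1 hu).2
  rcases lt_or_ge #G 2 with hG2 | hG2
  · obtain ⟨a, ha, b, hb, hab⟩ := one_lt_card.1 hc2
    have := card_pos.2 ⟨_, pline_mem_compLines (hc ha hb hab)⟩
    omega
  refine card_le_card_compLines hℓ hG hGcomp ?_ hG2
  rintro u ⟨hu, hua⟩ v ⟨hv, hva⟩
  by_contra huv
  exact huniv u v huv (pline_eq_univ_of_alone (hGcomp u hu) (hGcomp v hv) hua hva (hG hu hv huv))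

theorem sum_choose_card_fiber_add_card_le_ncard_plines (hℓ : StrictMono ℓ) (s : Finset ℕ)
    {c : Finset X} (hc : IsChain (· < ·) (c : Set X)) (hc2 : 2 ≤ #c)
    (huniv : ∀ a b : X, a ≠ b → pline a b ≠ Set.univ) :
    ∑ i ∈ s, (#{x | ℓ x = i}).choose 2 + #c ≤ (plines X).ncard := by
  have hpairs := card_filter_add_card_filter_not (s := incompPairs X)
    (p := fun p => ∀ a ∈ p, ∀ b ∈ p, ℓ a = ℓ b)
  have hchain := card_filter_add_card_filter_not (s := c) (p := fun u => ComparableOffLevel ℓ u)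
  have := sum_choose_card_fiber_le_card_incompPairs hℓ s
  have := card_filter_not_comparableOffLevel_le hc ℓ
  have := card_filter_comparableOffLevel_le_card_compLines hℓ hc hc2 huniv
  have := card_incompPairs_add_card_compLines_le (X := X)
  omega

end Counting

theorem stmt_9 {X : Type*} [Fintype X] [PartialOrder X] (n h : ℕ)
    (hn : Fintype.card X = n)
    (hmax : ∃ c : Finset X, IsChain (· < ·) (c : Set X) ∧ c.card = h)
    (hub : ∀ c : Finset X, IsChain (· < ·) (c : Set X) → c.card ≤ h)
    (h2 : 2 ≤ h)
    (huniv : ∀ a b : X, a ≠ b → pline a b ≠ Set.univ) :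
    h * Nat.choose (n / h) 2 + (n / h) * (n % h) + h ≤ (plines X).ncard := by
  obtain ⟨c, hc, rfl⟩ := hmax
  obtain ⟨ℓ, hℓ, hℓlt⟩ := exists_strictMono_forall_lt_of_forall_isChain_card_le hub
  have hfibers : ∑ i ∈ range #c, #{x | ℓ x = i} = n := by
    rw [← hn, ← card_univ]
    exact (card_eq_sum_card_fiberwise fun x _ => mem_range.2 (hℓlt x)).symm
  have hconvex := card_mul_choose_two_add_le_sum_choose_two (range #c) fun i => #{x | ℓ x = i}
  rw [card_range, hfibers] at hconvex
  have := sum_choose_card_fiber_add_card_le_ncard_plines hℓ (range #c) hc h2 huniv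
  omega
end
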